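/- Assume α ≥ 5, (s, σ, w, η, x, u) ∈ Δ, y ∈ Σ_k with y ≠ x, and (r, β) ∈ Π(s, σ, w, η, x, u, y). If r^β is not a suffix of the word ηxuy, then there exists a prefix η̄ of η such that (s, σ, w, η̄, x, uy) ∈ Δ. -/

import Mathlib

/-!
The period `q = |r|` of the suffix `r^β` of `sσwηxuy` lies between `|xuy|` and `|η|`: a shorter
period would copy `x` into `uy`; the suffix is longer than `ηxuy` but cannot cover `w` and one more
period, as `w` occurs only once in `sσw`; and `Γ` makes `η` long. Deleting the last `q` letters of
`η` therefore cuts exactly one period out of the periodic suffix. A power of the shortened word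
that stays on one side of the cut is already a factor of `sσwηxu`. One crossing the cut either has
a period short enough to combine with `q`, and then `r^β` extends by one more letter into an
`α`-power in `sσwηxu`, or has so long a period that, unable to run a full period past `w`, it is
too short to be an `α`-power once `Γ` is taken into account. Since `q` is small compared with
`|η|`, the shortened triple still lies in `Γ`.
-/

namespace PowerFreeFormalization

variable {A : Type*}

/-- `p` is the `β`-power `r^β` of the nonempty word `r`:
`|p| = β * |r|` and `p` is a prefix of `r r r ⋯`. -/
def IsPow (r p : List A) (β : ℚ) : Prop :=
  r ≠ [] ∧ (p.length : ℚ) = β * r.length ∧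
    p <+: (List.replicate p.length r).flatten

/-- A finite word `w` is `α`-power free: no factor of `w` is an `r^β` with `β ≥ α`. -/
def PowFree (α : ℚ) (w : List A) : Prop :=
  ∀ (r p : List A) (β : ℚ), α ≤ β → IsPow r p β → ¬ p <:+: w

/-- `p` is a finite factor of the right-infinite word `f : ℕ → A`, occurring at position `i`. -/
def OccursR (f : ℕ → A) (p : List A) (i : ℕ) : Prop :=
  p = (List.range p.length).map fun j => f (i + j)

/-- `p` is a finite factor of the right-infinite word `f`. -/
def FactorR (f : ℕ → A) (p : List A) : Prop :=
  ∃ i : ℕ, OccursR f p i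

/-- A left-infinite word is `g : ℕ → A`, where `g 0` is the rightmost letter,
`g 1` the one before it, etc.  `p` occurs in `g` ending at offset `i` from the
right end (offset `0` means `p` is a suffix). -/
def OccursL (g : ℕ → A) (p : List A) (i : ℕ) : Prop :=
  p.reverse = (List.range p.length).map fun j => g (i + j)

/-- `p` is a finite factor of the left-infinite word `g`. -/
def FactorL (g : ℕ → A) (p : List A) : Prop :=
  ∃ i : ℕ, OccursL g p i

/-- `p` is a suffix of the left-infinite word `g`. -/
def SuffixL (g : ℕ → A) (p : List A) : Prop :=
  OccursL g p 0

/-- `p` is a finite factor of the bi-infinite word `h : ℤ → A`, at position `i`. -/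
def OccursZ (h : ℤ → A) (p : List A) (i : ℤ) : Prop :=
  p = (List.range p.length).map fun j => h (i + j)

/-- `p` is a finite factor of the bi-infinite word `h`. -/
def FactorZ (h : ℤ → A) (p : List A) : Prop :=
  ∃ i : ℤ, OccursZ h p i

/-- A right-infinite word is `α`-power free iff all its finite factors are. -/
def PowFreeR (α : ℚ) (f : ℕ → A) : Prop :=
  ∀ p, FactorR f p → PowFree α p

/-- A left-infinite word is `α`-power free iff all its finite factors are. -/
def PowFreeL (α : ℚ) (g : ℕ → A) : Prop :=
  ∀ p, FactorL g p → PowFree α p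

/-- A bi-infinite word is `α`-power free iff all its finite factors are. -/
def PowFreeZ (α : ℚ) (h : ℤ → A) : Prop :=
  ∀ p, FactorZ h p → PowFree α p

/-- Appending a finite word `u` on the right end of a left-infinite word `g`,
yielding the left-infinite word `g u`. -/
def appendL (g : ℕ → A) (u : List A) : ℕ → A :=
  fun n => u.reverse.getD n (g (n - u.length))

/-- `p` is a recurrent factor of the right-infinite word `f`
(infinitely many occurrences). -/
def RecR (f : ℕ → A) (p : List A) : Prop :=
  ∀ N : ℕ, ∃ i, N ≤ i ∧ OccursR f p i

/-- `p` is a recurrent factor of the left-infinite word `g`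
(infinitely many occurrences). -/
def RecL (g : ℕ → A) (p : List A) : Prop :=
  ∀ N : ℕ, ∃ i, N ≤ i ∧ OccursL g p i

/-- `p` is a recurrent factor of the bi-infinite word `h`
(infinitely many occurrences). -/
def RecZ (h : ℤ → A) (p : List A) : Prop :=
  {i : ℤ | OccursZ h p i}.Infinite

/-- The bi-infinite word `g m f` obtained by concatenating a left-infinite word `g`,
a finite word `m` (starting at index `0`) and a right-infinite word `f`. -/
def biJoin (g : ℕ → A) (m : List A) (f : ℕ → A) : ℤ → A :=
  fun i => if i < 0 then g (-(i + 1)).toNat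
    else m.getD i.toNat (f (i.toNat - m.length))

/-- The set `Γ`:  triples `(w, η, u)` with `w` nonempty and, whenever `|u| ≤ |w|`,
`|η| ≥ (α+1)·α^(|w|-|u|)·|w|`. -/
def Gamma (α : ℚ) (w η u : List A) : Prop :=
  w ≠ [] ∧ (u.length ≤ w.length →
    (α + 1) * α ^ (w.length - u.length) * (w.length : ℚ) ≤ (η.length : ℚ))

/-- The set `Δ`: 6-tuples `(s, σ, w, η, x, u)` with `s` left-infinite, `w` nonempty,
such that `sσwηxu` is `α`-power free, `(w,η,u) ∈ Γ`, `w` occurs exactly once in `sσw`,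
and `x` is not a factor of `s` nor of `u`. -/
def Delta (α : ℚ) (s : ℕ → A) (σ w η : List A) (x : A) (u : List A) : Prop :=
  w ≠ [] ∧
  PowFreeL α (appendL s (σ ++ w ++ η ++ [x] ++ u)) ∧
  Gamma α w η u ∧
  (∃! i : ℕ, OccursL (appendL s (σ ++ w)) w i) ∧
  ¬ FactorL s [x] ∧ ¬ [x] <:+: u

/-- `(r, β) ∈ Π(s, σ, w, η, x, u, y)`:  `r` nonempty, `β > α` rational, `uy` is
`α`-power free and `r^β` is a suffix of the left-infinite word `sσwηxuy`. -/
def PiCond (α : ℚ) (s : ℕ → A) (σ w η : List A) (x : A) (u : List A) (y : A)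
    (r : List A) (β : ℚ) : Prop :=
  r ≠ [] ∧ α < β ∧ PowFree α (u ++ [y]) ∧
  ∃ p : List A, IsPow r p β ∧ SuffixL (appendL s (σ ++ w ++ η ++ [x] ++ u ++ [y])) p

theorem appendL_append (f : ℕ → A) (z₁ z₂ : List A) :
    appendL f (z₁ ++ z₂) = appendL (appendL f z₁) z₂ := by
  funext n
  simp only [appendL, List.reverse_append, List.length_append]
  rcases lt_or_ge n z₂.length with h | h
  · rw [List.getD_append _ _ _ _ (by simpa using h),
      List.getD_eq_getElem _ _ (by simpa using h), List.getD_eq_getElem _ _ (by simpa using h)]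
  · rw [List.getD_append_right _ _ _ _ (by simpa using h), List.length_reverse,
      List.getD_eq_default z₂.reverse _ (by simpa using h)]
    congr 2
    omega

theorem appendL_of_lt (f : ℕ → A) {z : List A} {i : ℕ} (h : i < z.reverse.length) :
    appendL f z i = z.reverse[i] :=
  List.getD_eq_getElem _ _ h

theorem appendL_length_add (f : ℕ → A) (z : List A) (i : ℕ) :
    appendL f z (z.length + i) = f i := by
  rw [appendL, List.getD_eq_default _ _ (by simp), Nat.add_sub_cancel_left]

theorem appendL_singleton_succ (f : ℕ → A) (c : A) (i : ℕ) : appendL f [c] (i + 1) = f i := by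
  simpa [Nat.add_comm] using appendL_length_add f [c] i

theorem appendL_take (f : ℕ → A) {η : List A} {n : ℕ} (hn : n ≤ η.length) (i : ℕ) :
    appendL f (η.take n) i = appendL f η (i + (η.length - n)) := by
  rcases lt_or_ge i n with h | h
  · rw [appendL_of_lt f (by simpa [hn] using h),
      appendL_of_lt f (by simp only [List.length_reverse]; omega)]
    simp only [List.getElem_reverse, List.getElem_take, List.length_take]
    congr 1
    omega
  · obtain ⟨j, rfl⟩ := Nat.exists_eq_add_of_le h
    have := appendL_length_add f (η.take n) j
    rw [List.length_take_of_le hn] at this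
    rw [this, show n + j + (η.length - n) = η.length + j by omega, appendL_length_add]

theorem occursL_iff {f : ℕ → A} {p : List A} {i : ℕ} :
    OccursL f p i ↔ ∀ j (hj : j < p.reverse.length), f (i + j) = p.reverse[j] := by
  rw [OccursL, List.ext_get_iff]
  simp [eq_comm]

theorem occursL_appendL_self (f : ℕ → A) (z : List A) : OccursL (appendL f z) z 0 :=
  occursL_iff.2 fun j hj => by rw [zero_add, appendL_of_lt f hj]

theorem occursL_appendL_length_add_iff {f : ℕ → A} {v w : List A} {i : ℕ} :
    OccursL (appendL f v) w (v.length + i) ↔ OccursL f w i := by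
  simp only [occursL_iff, Nat.add_assoc, appendL_length_add]

theorem OccursL.infix {f : ℕ → A} {e p : List A} {i : ℕ} (he : OccursL f e i) (h : p <:+: e) :
    ∃ a, OccursL f p a := by
  obtain ⟨l₁, l₂, rfl⟩ := h
  refine ⟨i + l₂.length, occursL_iff.2 fun j hj => ?_⟩
  have := occursL_iff.1 he (l₂.length + j) (by
    simp only [List.length_reverse, List.length_append] at hj ⊢
    omega)
  rw [Nat.add_assoc, this]
  simp only [List.reverse_append, List.append_assoc]
  rw [List.getElem_append_right (by simp), List.getElem_append_left (by simpa using hj)]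
  simp

theorem OccursL.suffix_of_length_le {f : ℕ → A} {p v : List A} (hp : OccursL f p 0)
    (hv : OccursL f v 0) (h : p.length ≤ v.length) : p <:+ v := by
  rw [← List.reverse_prefix, List.prefix_iff_eq_take, List.length_reverse, hp, hv,
    ← List.map_take, List.take_range, min_eq_left h]

theorem length_lt_of_suffixL_appendL {f : ℕ → A} {v p : List A} (h : SuffixL (appendL f v) p)
    (hv : ¬ p <:+ v) : v.length < p.length := by
  by_contra! hle
  exact hv (OccursL.suffix_of_length_le h (occursL_appendL_self f v) hle)

theorem getElem_flatten_replicate {r : List A} {n m : ℕ}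
    (hm : m < (List.replicate n r).flatten.length) :
    (List.replicate n r).flatten[m] =
      r[m % r.length]'(Nat.mod_lt _ (List.length_pos_iff.2 fun h => by simp [h] at hm)) := by
  induction n generalizing m with
  | zero => simp at hm
  | succ n ih =>
    simp only [List.replicate_succ, List.flatten_cons]
    rcases lt_or_ge m r.length with h | h
    · simp [List.getElem_append_left h, Nat.mod_eq_of_lt h]
    · rw [List.getElem_append_right h, ih]
      simp [Nat.mod_eq_sub_mod h]

theorem IsPow.getElem_add_length {r p : List A} {β : ℚ} (h : IsPow r p β) {m : ℕ}
    (hm : m + r.length < p.length) : p[m + r.length] = p[m] := by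
  rw [h.2.2.getElem, h.2.2.getElem, getElem_flatten_replicate, getElem_flatten_replicate]
  simp

theorem isPow_take_of_getElem_add {e : List A} {ν : ℕ} (hν : 0 < ν) (hνe : ν ≤ e.length)
    (hper : ∀ m (hm : m + ν < e.length), e[m + ν] = e[m]) :
    IsPow (e.take ν) e (e.length / ν) := by
  have hmod : ∀ m (hm : m < e.length), e[m] = e[m % ν]'(by
      have := Nat.mod_lt m hν; omega) := by
    intro m
    induction m using Nat.strong_induction_on with
    | _ m ih =>
      intro hm
      rcases lt_or_ge m ν with h | h
      · simp [Nat.mod_eq_of_lt h]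
      · obtain ⟨k, rfl⟩ := Nat.exists_eq_add_of_le' h
        rw [hper k hm, ih k (by omega) (by omega)]
        simp
  have hlen : (e.take ν).length = ν := List.length_take_of_le hνe
  refine ⟨List.ne_nil_of_length_pos (by omega), ?_, ?_⟩
  · rw [hlen]
    field_simp
  · rw [List.prefix_iff_eq_take]
    refine List.ext_getElem ?_ fun m hm _ => ?_
    · simp only [List.length_take, List.length_flatten, List.map_replicate, List.sum_replicate,
        smul_eq_mul, hlen]
      exact (min_eq_left (Nat.le_mul_of_pos_right _ hν)).symm
    · rw [List.getElem_take, getElem_flatten_replicate, hmod m hm]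
      simp [hlen]

def PeriodicOn (f : ℕ → A) (a len ν : ℕ) : Prop :=
  ∀ j, j + ν < len → f (a + j + ν) = f (a + j)

section Periodicity

variable {f g : ℕ → A} {a len ν : ℕ}

theorem OccursL.periodicOn {r p : List A} {β : ℚ} (hocc : OccursL f p a) (hpow : IsPow r p β) :
    PeriodicOn f a p.length r.length := by
  intro j hj
  rw [occursL_iff] at hocc
  rw [Nat.add_assoc, hocc _ (by simp only [List.length_reverse]; omega),
    hocc _ (by simp only [List.length_reverse]; omega)]
  have e : p.length - 1 - j = p.length - 1 - (j + r.length) + r.length := by omega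
  simp only [List.getElem_reverse, e]
  exact (hpow.getElem_add_length _).symm

theorem PowFreeL.lt_of_periodicOn {α : ℚ} (hf : PowFreeL α f) (hν : 0 < ν) (hνlen : ν ≤ len)
    (h : PeriodicOn f a len ν) : len < α * ν := by
  by_contra! hle
  set e := ((List.range len).map fun j => f (a + j)).reverse
  have hlen : e.length = len := by simp [e]
  have hocc : OccursL f e a := by simp [OccursL, e]
  have hpow : IsPow (e.take ν) e (e.length / ν) := by
    refine isPow_take_of_getElem_add hν (by omega) fun m hm => ?_
    simp only [e, List.getElem_reverse, List.getElem_map, List.getElem_range, List.length_map,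
      List.length_range]
    rw [hlen] at hm
    rw [← h _ (by omega)]
    congr 1
    omega
  refine hf e ⟨a, hocc⟩ _ e _ ?_ hpow List.infix_rfl
  rwa [hlen, le_div_iff₀ (by exact_mod_cast hν)]

theorem powFreeL_of_forall_periodicOn {α : ℚ} (hα : 1 ≤ α)
    (h : ∀ a len ν, 0 < ν → ν ≤ len → PeriodicOn f a len ν → len < α * ν) :
    PowFreeL α f := by
  rintro e ⟨i, he⟩ r p β hαβ hpow hpe
  obtain ⟨a, hp⟩ := he.infix hpe
  have hr : 0 < r.length := List.length_pos_iff.2 hpow.1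
  have hlen : (p.length : ℚ) = β * r.length := hpow.2.1
  have hrp : r.length ≤ p.length := by
    have : (r.length : ℚ) ≤ p.length := by rw [hlen]; nlinarith
    exact_mod_cast this
  have := h a _ _ hr hrp (hp.periodicOn hpow)
  nlinarith

theorem PeriodicOn.congr {b : ℕ} (h : PeriodicOn f a len ν)
    (hfg : ∀ j < len, g (b + j) = f (a + j)) : PeriodicOn g b len ν := fun j hj => by
  have := hfg (j + ν) (by omega)
  rw [← Nat.add_assoc, ← Nat.add_assoc] at this
  rw [this, hfg j (by omega), h j hj]

theorem PeriodicOn.mono {b len' : ℕ} (h : PeriodicOn f a len ν) (hab : a ≤ b)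
    (hlen : b + len' ≤ a + len) : PeriodicOn f b len' ν := fun j hj => by
  have := h (b - a + j) (by omega)
  rwa [show a + (b - a + j) = b + j by omega] at this

theorem PeriodicOn.add_length_lt {w : List A} {M : ℕ} (h : PeriodicOn f a len ν) (hν : 0 < ν)
    (haM : a ≤ M) (hw : OccursL f w M) (huniq : ∀ i, M ≤ i → OccursL f w i → i = M) :
    a + len < M + w.length + ν := by
  by_contra! hle
  have hwν : OccursL f w (M + ν) := occursL_iff.2 fun j hj => by
    have := h (M - a + j) (by simp only [List.length_reverse] at hj; omega)
    rw [show a + (M - a + j) = M + j by omega] at this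
    rw [show M + ν + j = M + j + ν by omega, this, occursL_iff.1 hw j hj]
  have := huniq _ (by omega) hwν
  omega

theorem PeriodicOn.lt_of_existsUnique_occursL {v w : List A}
    (h : PeriodicOn (appendL (appendL f w) v) a len ν) (hν : 0 < ν) (ha : a ≤ v.length)
    (huniq : ∃! i, OccursL (appendL f w) w i) : a + len < v.length + w.length + ν := by
  obtain ⟨i₀, -, hi₀⟩ := huniq
  have hw₀ : OccursL (appendL f w) w 0 := occursL_appendL_self f w
  refine h.add_length_lt hν ha (by simpa using occursL_appendL_length_add_iff.2 hw₀)
    fun i hi hwi => ?_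
  obtain ⟨j, rfl⟩ := Nat.exists_eq_add_of_le hi
  have := (hi₀ _ (occursL_appendL_length_add_iff.1 hwi)).trans (hi₀ 0 hw₀).symm
  omega

theorem PeriodicOn.length_lt_of_appendL_cons {x : A} {z : List A} {L q : ℕ}
    (h : PeriodicOn (appendL f (x :: z)) 0 L q) (hq : 0 < q) (hL : z.length < L) (hx : x ∉ z) :
    z.length < q := by
  by_contra! hqz
  have e := h (z.length - q) (by omega)
  rw [zero_add, Nat.sub_add_cancel hqz, appendL_of_lt f (by simp),
    appendL_of_lt f (by simp only [List.length_reverse, List.length_cons]; omega)] at e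
  simp only [List.reverse_cons] at e
  rw [List.getElem_append_right (by simp),
    List.getElem_append_left (by simp only [List.length_reverse]; omega)] at e
  simp only [List.length_reverse, Nat.sub_self, List.getElem_singleton] at e
  exact hx (e ▸ List.mem_reverse.1 (List.getElem_mem _))

theorem PeriodicOn.of_eq_on_Ico {L q : ℕ} (hL : PeriodicOn f 0 L q) (hq : 0 < q)
    (h : ∀ i, a ≤ i → i < a + q → f (i + ν) = f i) (haL : a + q + ν ≤ L) :
    PeriodicOn f 0 L ν := by
  have step : ∀ i, i + q < L → f (i + q) = f i := fun i hi => by simpa using hL i hi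
  have above : ∀ i, a ≤ i → i + ν < L → f (i + ν) = f i := by
    intro i
    induction i using Nat.strong_induction_on with
    | _ i ih =>
      intro hai hi
      rcases lt_or_ge i (a + q) with hiq | hiq
      · exact h i hai hiq
      · obtain ⟨k, rfl⟩ := Nat.exists_eq_add_of_le' (le_of_add_le_right hiq)
        rw [show k + q + ν = k + ν + q by omega, step _ (by omega), step _ (by omega)]
        exact ih k (by omega) (by omega) (by omega)
  have below : ∀ n i, a - i = n → i + ν < L → f (i + ν) = f i := by
    intro n
    induction n using Nat.strong_induction_on with
    | _ n ih =>
      intro i hn hi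
      rcases le_or_gt a i with hai | hai
      · exact above i hai hi
      · rw [← step _ (by omega), ← step i (by omega), show i + ν + q = i + q + ν by omega]
        exact ih _ (by omega) _ rfl (by omega)
  intro j hj
  simpa using below _ j rfl hj

/-- Two periods `q` and `ν` meeting on `q` consecutive positions below the cut make `ν` a period
of all of `t` below `L`; reading `t L` through the cut then extends the period `q` by a letter. -/
theorem periodicOn_succ_of_crossing {t tb : ℕ → A} {L q : ℕ} (ht : PeriodicOn t 0 L q)
    (hq : 0 < q) (hlo : ∀ i < L - q, tb i = t i) (hL : tb (L - q) = t L)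
    (hper : PeriodicOn tb a len ν) (hν : 0 < ν) (haL : a + ν + 2 * q ≤ L)
    (hcross : L - q < a + len) : PeriodicOn t 0 (L + 1) q := by
  have htν : PeriodicOn t 0 L ν := ht.of_eq_on_Ico hq (a := a) (fun i hai hi => by
    have := hper (i - a) (by omega)
    rw [show a + (i - a) = i by omega] at this
    rw [← hlo i (by omega), ← hlo (i + ν) (by omega), this]) (by omega)
  have htL : t L = t (L - q) := by
    have e₁ := hper (L - q - ν - a) (by omega)
    have e₂ := htν (L - q - ν) (by omega)
    rw [show a + (L - q - ν - a) = L - q - ν by omega, show L - q - ν + ν = L - q by omega] at e₁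
    rw [zero_add, show L - q - ν + ν = L - q by omega] at e₂
    rw [← hL, e₁, hlo _ (by omega), e₂]
  intro j hj
  rcases lt_or_ge (j + q) L with hjq | hjq
  · exact ht j hjq
  · rw [zero_add, show j + q = L by omega, htL, show j = L - q by omega]

end Periodicity

/-- `tb` is `t` with the block `[Z, Z + q)` cut out; `hlong` excludes the windows that cross the
cut with a period too long to interact with the period `q` of `t`. -/
theorem powFreeL_of_cut {α : ℚ} (hα : 1 ≤ α) {t tb : ℕ → A} {L q Z : ℕ}
    (hg : PowFreeL α fun i => t (i + 1)) (ht : PeriodicOn t 0 L q) (hq : 0 < q)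
    (hqL : α * q < L) (hZL : Z + q ≤ L)
    (hlo : ∀ i < Z, tb i = t i) (hhi : ∀ i, Z ≤ i → tb i = t (i + q))
    (hlong : ∀ a len ν : ℕ, 0 < ν → α * ν ≤ len → PeriodicOn tb a len ν → a < Z →
      L < a + ν + 2 * q → False) :
    PowFreeL α tb := by
  have hmid : ∀ i < L - q, tb i = t i := fun i hi => by
    rcases lt_or_ge i Z with h | h
    · exact hlo i h
    · exact (hhi i h).trans (by simpa using ht i (by omega))
  refine powFreeL_of_forall_periodicOn hα fun a len ν hν hνlen hper => ?_
  by_contra! hlen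
  by_cases hin : Z ≤ a ∨ a + len + q ≤ L
  · have hg' : PeriodicOn (fun i => t (i + 1)) (a + q - 1) len ν := hper.congr fun j hj => by
      rw [show a + q - 1 + j + 1 = 0 + (a + j) + q by omega]
      rcases hin with h | h
      · rw [hhi _ (by omega), zero_add]
      · rw [hmid _ (by omega), ht _ (by omega), zero_add]
    exact (hg.lt_of_periodicOn hν hνlen hg').not_ge hlen
  rw [not_or, not_le, not_le] at hin
  by_cases hshort : a + ν + 2 * q ≤ L
  · have hL : tb (L - q) = t L := by rw [hhi _ (by omega), Nat.sub_add_cancel (by omega)]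
    have ht' := periodicOn_succ_of_crossing ht hq hmid hL hper hν hshort (by omega)
    have hg' : PeriodicOn (fun i => t (i + 1)) 0 L q :=
      (ht'.mono (b := 1) (len' := L) le_add_self (by omega)).congr fun j _ => by
        rw [zero_add, Nat.add_comm]
    exact (hg.lt_of_periodicOn hq (by omega) hg').not_gt hqL
  · exact hlong a len ν hν hlen hper hin.1 (by omega)

theorem Gamma.thirty_mul_le {α : ℚ} (hα : 5 ≤ α) {w η u : List A} (h : Gamma α w η u)
    (hu : u.length < w.length) : 30 * w.length ≤ η.length := by
  have hΓ := h.2 hu.le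
  have hpow : 5 ≤ α ^ (w.length - u.length) :=
    hα.trans (le_self_pow₀ (by linarith) (by omega))
  have : (30 : ℚ) * w.length ≤ η.length := by
    have : (30 : ℚ) ≤ (α + 1) * α ^ (w.length - u.length) := by nlinarith
    nlinarith
  exact_mod_cast this

theorem Gamma.take_sub {α : ℚ} (hα : 5 ≤ α) {w η u : List A} {q : ℕ} (h : Gamma α w η u)
    (hq : 4 * q < η.length + u.length + w.length + 1) (y : A) :
    Gamma α w (η.take (η.length - q)) (u ++ [y]) := by
  refine ⟨h.1, fun hle => ?_⟩
  simp only [List.length_append, List.length_singleton] at hle ⊢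
  set E := (α + 1) * α ^ (w.length - (u.length + 1)) * w.length
  have hE : α * E ≤ η.length := by
    have := h.2 (by omega)
    rwa [show w.length - u.length = w.length - (u.length + 1) + 1 by omega, pow_succ,
      show (α + 1) * (α ^ (w.length - (u.length + 1)) * α) * w.length = α * E by ring] at this
  have hE₆ : 6 * (w.length : ℚ) ≤ E := by
    have : (1 : ℚ) ≤ α ^ (w.length - (u.length + 1)) := one_le_pow₀ (by linarith)
    have : (6 : ℚ) ≤ (α + 1) * α ^ (w.length - (u.length + 1)) := by nlinarith
    nlinarith
  have hqQ : (4 * q : ℚ) < η.length + u.length + w.length + 1 := by exact_mod_cast hq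
  have hUW : (u.length : ℚ) + 1 ≤ w.length := by exact_mod_cast hle
  have hqη : (q : ℚ) ≤ η.length := by nlinarith
  rw [List.length_take, min_eq_left (Nat.sub_le _ _), Nat.cast_sub (by exact_mod_cast hqη)]
  nlinarith

theorem appendL_eq_appendL_cons (s : ℕ → A) (σ w η u : List A) (x y : A) :
    appendL s (σ ++ w ++ η ++ [x] ++ u ++ [y]) =
      appendL (appendL (appendL (appendL s σ) w) η) (x :: (u ++ [y])) := by
  simp only [← appendL_append, List.append_assoc, List.cons_append, List.nil_append]

section Configuration

variable {α : ℚ} {s : ℕ → A} {σ w η u : List A} {x y : A} {L q : ℕ}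

theorem Delta.period_bounds (hα : 5 ≤ α) (hΔ : Delta α s σ w η x u) (hyx : y ≠ x)
    (ht : PeriodicOn (appendL s (σ ++ w ++ η ++ [x] ++ u ++ [y])) 0 L q) (hq : 0 < q)
    (h5q : 5 * q < L) (hL : η.length + u.length + 2 < L) :
    L < η.length + u.length + 2 + w.length + q ∧ u.length + 2 ≤ q ∧ q ≤ η.length := by
  obtain ⟨-, -, hΓ, huniq, -, hxu⟩ := hΔ
  rw [appendL_append] at huniq
  rw [appendL_eq_appendL_cons] at ht
  have hL₂ := (appendL_append _ η _ ▸ ht).lt_of_existsUnique_occursL hq (Nat.zero_le _) huniq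
  have hq₁ := (appendL_append _ _ η ▸ ht).length_lt_of_appendL_cons hq
    (by simp only [List.length_append, List.length_cons, List.length_nil]; omega)
    (by simpa [hyx.symm] using fun h => hxu ((List.singleton_infix_iff _ _).2 h))
  have := hΓ.thirty_mul_le hα
  simp only [List.length_append, List.length_cons, List.length_nil] at hL₂ hq₁
  refine ⟨by omega, by omega, ?_⟩
  by_cases huw : u.length < w.length
  · have := this huw
    omega
  · omega

theorem Delta.powFreeL_cut (hα : 5 ≤ α) (hΔ : Delta α s σ w η x u)
    (ht : PeriodicOn (appendL s (σ ++ w ++ η ++ [x] ++ u ++ [y])) 0 L q) (hq : 0 < q)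
    (hqL : α * q < L) (h5q : 5 * q < L) (hL : η.length + u.length + 2 < L)
    (hb : L < η.length + u.length + 2 + w.length + q ∧ u.length + 2 ≤ q ∧ q ≤ η.length) :
    PowFreeL α (appendL s (σ ++ w ++ η.take (η.length - q) ++ [x] ++ (u ++ [y]))) := by
  obtain ⟨-, hfree, hΓ, huniq, -, -⟩ := hΔ
  obtain ⟨hL₂, hq₁, hq₂⟩ := hb
  rw [appendL_append] at huniq
  have hg : (fun i => appendL s (σ ++ w ++ η ++ [x] ++ u ++ [y]) (i + 1)) =
      appendL s (σ ++ w ++ η ++ [x] ++ u) := by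
    funext i
    rw [appendL_append _ _ [y], appendL_singleton_succ]
  rw [← List.append_assoc, appendL_eq_appendL_cons]
  rw [appendL_eq_appendL_cons] at ht hg
  refine powFreeL_of_cut (Z := (x :: (u ++ [y])).length) (by linarith) (hg ▸ hfree) ht hq hqL
    (by simp only [List.length_cons, List.length_append, List.length_nil]; omega)
    (fun i hi => ?_) (fun i hi => ?_) ?_
  · rw [appendL_of_lt _ (by simpa using hi), appendL_of_lt _ (by simpa using hi)]
  · obtain ⟨j, rfl⟩ := Nat.exists_eq_add_of_le hi
    rw [appendL_length_add, Nat.add_assoc, appendL_length_add, appendL_take _ (Nat.sub_le _ _),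
      Nat.sub_sub_self hq₂]
  · -- a crossing window with a long period ends before `ν` letters past `w`, too short by `Γ`
    intro a len ν hν hαν hper ha hLa
    have h5ν : 5 * ν ≤ len := by
      have : (0 : ℚ) ≤ ν := Nat.cast_nonneg ν
      exact_mod_cast (by nlinarith : (5 : ℚ) * ν ≤ len)
    rw [← appendL_append] at hper
    simp only [List.length_cons, List.length_append, List.length_nil] at ha
    have := hper.lt_of_existsUnique_occursL hν (by simp only [List.length_append,
      List.length_take, List.length_cons, List.length_nil]; omega) huniq
    simp only [List.length_append, List.length_take, List.length_cons, List.length_nil,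
      min_eq_left (Nat.sub_le _ _)] at this
    by_cases huw : u.length < w.length
    · have := hΓ.thirty_mul_le hα huw
      omega
    · omega

end Configuration

theorem statement8_general (k : ℕ) (α : ℚ) (hα : 5 ≤ α)
    (s : ℕ → Fin k) (σ w η u : List (Fin k)) (x y : Fin k)
    (r : List (Fin k)) (β : ℚ)
    (hΔ : Delta α s σ w η x u) (hyx : y ≠ x)
    (hPi : PiCond α s σ w η x u y r β)
    (hnsuf : ¬ ∃ p : List (Fin k), IsPow r p β ∧ p <:+ (η ++ [x] ++ u ++ [y])) :
    ∃ η' : List (Fin k), η' <+: η ∧ Delta α s σ w η' x (u ++ [y]) := by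
  obtain ⟨-, hαβ, -, p, hpow, hsuf⟩ := hPi
  have hq : 0 < r.length := List.length_pos_iff.2 hpow.1
  have hqL : α * r.length < p.length := by
    rw [hpow.2.1]
    exact mul_lt_mul_of_pos_right hαβ (by exact_mod_cast hq)
  have h5q : 5 * r.length < p.length := by
    exact_mod_cast (by nlinarith : (5 : ℚ) * r.length < p.length)
  have hL : η.length + u.length + 2 < p.length := by
    have hsuf' : SuffixL (appendL (appendL s (σ ++ w)) (η ++ [x] ++ u ++ [y])) p := by
      simpa only [← appendL_append, List.append_assoc] using hsuf
    simpa [Nat.add_assoc] using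
      length_lt_of_suffixL_appendL hsuf' fun h => hnsuf ⟨p, hpow, h⟩
  have ht := OccursL.periodicOn hsuf hpow
  have hb := hΔ.period_bounds hα hyx ht hq h5q hL
  have hcut := hΔ.powFreeL_cut hα ht hq hqL h5q hL hb
  obtain ⟨hw, -, hΓ, huniq, hxs, hxu⟩ := hΔ
  refine ⟨η.take (η.length - r.length), List.take_prefix _ _, hw, hcut,
    hΓ.take_sub hα (by omega) y, huniq, hxs, ?_⟩
  rw [List.singleton_infix_iff, List.mem_append, List.mem_singleton, not_or]
  exact ⟨fun h => hxu ((List.singleton_infix_iff _ _).2 h), hyx.symm⟩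

/-- Proposition: if `(s,σ,w,η,x,u) ∈ Δ`, `y ≠ x`,
`(r,β) ∈ Π(s,σ,w,η,x,u,y)` and `r^β` is not a suffix of `ηxuy`, then there is a
prefix `η̄` of `η` with `(s,σ,w,η̄,x,uy) ∈ Δ`. -/
theorem statement8 (k : ℕ) (hk : 3 ≤ k) (α : ℚ) (hα : 5 ≤ α)
    (s : ℕ → Fin k) (σ w η u : List (Fin k)) (x y : Fin k)
    (r : List (Fin k)) (β : ℚ)
    (hΔ : Delta α s σ w η x u) (hyx : y ≠ x)
    (hPi : PiCond α s σ w η x u y r β)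
    (hnsuf : ¬ ∃ p : List (Fin k), IsPow r p β ∧ p <:+ (η ++ [x] ++ u ++ [y])) :
    ∃ η' : List (Fin k), η' <+: η ∧ Delta α s σ w η' x (u ++ [y]) :=
  statement8_general k α hα s σ w η u x y r β hΔ hyx hPi hnsuf

end PowerFreeFormalization
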